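/- arXiv:1008.2723 — 9 statements merged into one kernel-verified Lean document; each statement's English description precedes it below -/
import Mathlib

section
/- In an associative dialgebra, the quasi-Jordan product a◁b = a⊣b + b⊢a satisfies right commutativity: a◁(b◁c) = a◁(c◁b). -/
/-- An associative dialgebra: two bilinear operations `l` (⊣) and `r` (⊢)
satisfying the five dialgebra axioms. -/
structure Dialgebra (D : Type*) [AddCommGroup D] where
  l : D → D → D
  r : D → D → D
  l_add_left : ∀ a b c : D, l (a + b) c = l a c + l b c
  l_add_right : ∀ a b c : D, l a (b + c) = l a b + l a c
  r_add_left : ∀ a b c : D, r (a + b) c = r a c + r b c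
  r_add_right : ∀ a b c : D, r a (b + c) = r a b + r a c
  ax1 : ∀ a b c : D, r (r a b) c = r (l a b) c
  ax2 : ∀ a b c : D, l a (l b c) = l a (r b c)
  ax3 : ∀ a b c : D, l (l a b) c = l a (l b c)
  ax4 : ∀ a b c : D, r (r a b) c = r a (r b c)
  ax5 : ∀ a b c : D, l (r a b) c = r a (l b c)

/-- The quasi-Jordan product  a ◁ b = a ⊣ b + b ⊢ a. -/
def Dialgebra.qj {D : Type*} [AddCommGroup D] (A : Dialgebra D) (a b : D) : D :=
  A.l a b + A.r b a

namespace Dialgebra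

variable {D : Type*} [AddCommGroup D] (A : Dialgebra D) (a b c : D)

theorem l_qj : A.l a (A.qj b c) = A.l a (A.r b c) + A.l a (A.r c b) := by
  rw [qj, l_add_right, ax2]

theorem r_qj : A.r (A.qj b c) a = A.r (A.r b c) a + A.r (A.r c b) a := by
  rw [qj, r_add_left, ← ax1]

/-- Inside `a ◁ (b ◁ c)` the axioms turn every `b ⊣ c` into `b ⊢ c`, so only the
products `b ⊢ c` and `c ⊢ b` remain, and they enter symmetrically. -/
theorem qj_qj : A.qj a (A.qj b c) =
    (A.l a (A.r b c) + A.l a (A.r c b)) + (A.r (A.r b c) a + A.r (A.r c b) a) := by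
  rw [qj, l_qj, r_qj]

end Dialgebra

/-- Right commutativity of the quasi-Jordan product. -/
theorem quasiJordan_right_commutative {D : Type*} [AddCommGroup D] (A : Dialgebra D)
    (a b c : D) : A.qj a (A.qj b c) = A.qj a (A.qj c b) := by
  rw [A.qj_qj, A.qj_qj, add_comm (A.l a (A.r c b)), add_comm (A.r (A.r c b) a)]
end

section
/- In an associative dialgebra, the quasi-Jordan product a◁b = a⊣b + b⊢a satisfies the multilinear quasi-Jordan identity: (a◁(b◁c))◁d + (a◁(b◁d))◁c + (a◁(c◁d))◁b = (a◁b)◁(c◁d) + (a◁c)◁(b◁d) + (a◁d)◁(b◁c). -/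
/-!
Let `D` act on itself by `L y = (y ⊢ ·)` and `R y = (· ⊣ y)`. The dialgebra axioms say exactly
that `y ↦ L y` is multiplicative and `y ↦ R y` anti-multiplicative for both products, and that
every `L y` commutes with every `R z`. Hence `x ◁ y = (L y + R y) x`, and `L (b ◁ c)`,
`R (b ◁ c)` are anticommutators. Both sides of the identity are then operators applied to `a`,
and their difference is a sum of commutators that splits into an `L`-part and an `R`-part, each
vanishing by the linearized Jordan identity of the anticommutator in an associative ring.
-/

attribute [local instance] LieRing.ofAssociativeRing

theorem lie_mul_add_mul_swap_sum_eq_zero {R : Type*} [Ring R] (a b c : R) :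
    ⁅c, a * b + b * a⁆ + ⁅b, a * c + c * a⁆ + ⁅a, b * c + c * b⁆ = 0 := by
  simp only [Ring.lie_def]
  noncomm_ring

namespace Dialgebra

variable {D : Type*} [AddCommGroup D] (A : Dialgebra D)

def leftMul (y : D) : Module.End ℤ D :=
  (AddMonoidHom.mk' (A.r y) (A.r_add_right y)).toIntLinearMap

def rightMul (y : D) : Module.End ℤ D :=
  (AddMonoidHom.mk' (fun x => A.l x y) (fun x x' => A.l_add_left x x' y)).toIntLinearMap

def qjRight (y : D) : Module.End ℤ D :=
  A.rightMul y + A.leftMul y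

theorem qjRight_apply (x y : D) : A.qjRight y x = A.qj x y := rfl

theorem leftMul_r (y z : D) : A.leftMul (A.r y z) = A.leftMul y * A.leftMul z :=
  LinearMap.ext fun x => A.ax4 y z x

theorem leftMul_l (y z : D) : A.leftMul (A.l y z) = A.leftMul y * A.leftMul z :=
  LinearMap.ext fun x => (A.ax1 y z x).symm.trans (A.ax4 y z x)

theorem rightMul_l (y z : D) : A.rightMul (A.l y z) = A.rightMul z * A.rightMul y :=
  LinearMap.ext fun x => (A.ax3 x y z).symm

theorem rightMul_r (y z : D) : A.rightMul (A.r y z) = A.rightMul z * A.rightMul y :=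
  LinearMap.ext fun x => (A.ax2 x y z).symm.trans (A.ax3 x y z).symm

theorem leftMul_add (y z : D) : A.leftMul (y + z) = A.leftMul y + A.leftMul z :=
  LinearMap.ext fun x => A.r_add_left y z x

theorem rightMul_add (y z : D) : A.rightMul (y + z) = A.rightMul y + A.rightMul z :=
  LinearMap.ext fun x => A.l_add_right x y z

theorem commute_leftMul_rightMul (y z : D) : Commute (A.leftMul y) (A.rightMul z) :=
  LinearMap.ext fun x => (A.ax5 y x z).symm

theorem leftMul_qj (y z : D) :
    A.leftMul (A.qj y z) = A.leftMul y * A.leftMul z + A.leftMul z * A.leftMul y := by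
  rw [qj, leftMul_add, leftMul_l, leftMul_r]

theorem rightMul_qj (y z : D) :
    A.rightMul (A.qj y z) = A.rightMul y * A.rightMul z + A.rightMul z * A.rightMul y := by
  rw [qj, rightMul_add, rightMul_l, rightMul_r, add_comm]

theorem lie_qjRight_qjRight_qj (x y z : D) :
    ⁅A.qjRight x, A.qjRight (A.qj y z)⁆ =
      ⁅A.rightMul x, A.rightMul y * A.rightMul z + A.rightMul z * A.rightMul y⁆ +
        ⁅A.leftMul x, A.leftMul y * A.leftMul z + A.leftMul z * A.leftMul y⁆ := by
  have hRL : ⁅A.rightMul x, A.leftMul (A.qj y z)⁆ = 0 :=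
    (A.commute_leftMul_rightMul _ x).symm.lie_eq
  have hLR : ⁅A.leftMul x, A.rightMul (A.qj y z)⁆ = 0 :=
    (A.commute_leftMul_rightMul x _).lie_eq
  rw [qjRight, qjRight, add_lie, lie_add, lie_add, hRL, hLR, rightMul_qj, leftMul_qj]
  abel

theorem sum_lie_qjRight_qjRight_qj_eq_zero (b c d : D) :
    ⁅A.qjRight d, A.qjRight (A.qj b c)⁆ + ⁅A.qjRight c, A.qjRight (A.qj b d)⁆ +
      ⁅A.qjRight b, A.qjRight (A.qj c d)⁆ = 0 := by
  have h := congrArg₂ (· + ·)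
    (lie_mul_add_mul_swap_sum_eq_zero (A.rightMul b) (A.rightMul c) (A.rightMul d))
    (lie_mul_add_mul_swap_sum_eq_zero (A.leftMul b) (A.leftMul c) (A.leftMul d))
  simp only [add_zero] at h
  rw [← h, lie_qjRight_qjRight_qj, lie_qjRight_qjRight_qj, lie_qjRight_qjRight_qj]
  abel

end Dialgebra

/-- The multilinear quasi-Jordan identity holds for the quasi-Jordan product. -/
theorem quasiJordan_multilinear_identity {D : Type*} [AddCommGroup D] (A : Dialgebra D)
    (a b c d : D) :
    A.qj (A.qj a (A.qj b c)) d + A.qj (A.qj a (A.qj b d)) c + A.qj (A.qj a (A.qj c d)) b =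
      A.qj (A.qj a b) (A.qj c d) + A.qj (A.qj a c) (A.qj b d) + A.qj (A.qj a d) (A.qj b c) := by
  have key := congrArg (· a) (A.sum_lie_qjRight_qjRight_qj_eq_zero b c d)
  simp only [Ring.lie_def, LinearMap.add_apply, LinearMap.sub_apply, Module.End.mul_apply,
    Dialgebra.qjRight_apply, LinearMap.zero_apply] at key
  rw [← sub_eq_zero, ← key]
  abel
end

section
/- In an associative dialgebra, the quasi-Jordan product a◁b = a⊣b + b⊢a satisfies the multilinear associator-derivation identity: ((a◁b)◁d)◁c + ((a◁c)◁d)◁b + a◁((b◁c)◁d) = (a◁(b◁c))◁d + (a◁(b◁d))◁c + (a◁(c◁d))◁b. -/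
/-- The multilinear associator-derivation identity holds for the quasi-Jordan product. -/
theorem associatorDerivation_multilinear_identity {D : Type*} [AddCommGroup D] (A : Dialgebra D)
    (a b c d : D) :
    A.qj (A.qj (A.qj a b) d) c + A.qj (A.qj (A.qj a c) d) b + A.qj a (A.qj (A.qj b c) d) =
      A.qj (A.qj a (A.qj b c)) d + A.qj (A.qj a (A.qj b d)) c + A.qj (A.qj a (A.qj c d)) b := by
  simp only [Dialgebra.qj, A.l_add_left, A.l_add_right, A.r_add_left, A.r_add_right]
  simp only [← A.ax3, ← A.ax2, A.ax4, ← A.ax1, A.ax5]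
  abel
end

section
/- In an associative dialgebra over a ring of characteristic not 2, the quasi-Jordan identity (b◁a)◁(a◁a) = (b◁(a◁a))◁a holds for the product a◁b = a⊣b + b⊢a. -/
namespace Dialgebra

variable {D : Type*} [AddCommGroup D] (A : Dialgebra D)

theorem l_two_nsmul_left (x y : D) : A.l (2 • x) y = 2 • A.l x y := by
  rw [two_nsmul, two_nsmul, A.l_add_left]

theorem r_two_nsmul_right (x y : D) : A.r x (2 • y) = 2 • A.r x y := by
  rw [two_nsmul, two_nsmul, A.r_add_right]

theorem l_qj_self (x a : D) : A.l x (A.qj a a) = 2 • A.l (A.l x a) a := by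
  rw [qj, A.l_add_right, ← A.ax2, A.ax3, two_nsmul]

theorem r_qj_self (a x : D) : A.r (A.qj a a) x = 2 • A.r a (A.r a x) := by
  rw [qj, A.r_add_left, ← A.ax1, A.ax4, two_nsmul]

theorem qj_qj_self (x a : D) :
    A.qj x (A.qj a a) = 2 • (A.l (A.l x a) a + A.r a (A.r a x)) := by
  rw [qj, l_qj_self, r_qj_self, smul_add]

end Dialgebra

theorem quasiJordan_identity_general {D : Type*}
    [AddCommGroup D] (A : Dialgebra D) (a b : D) :
    A.qj (A.qj b a) (A.qj a a) = A.qj (A.qj b (A.qj a a)) a := by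
  rw [A.qj_qj_self, A.qj_qj_self, Dialgebra.qj, Dialgebra.qj]
  simp only [A.l_two_nsmul_left, A.r_two_nsmul_right, A.l_add_left, A.r_add_right, A.ax5]
  abel

/-- The quasi-Jordan identity (b◁a)◁(a◁a) = (b◁(a◁a))◁a, over a ring of characteristic ≠ 2. -/
theorem quasiJordan_identity {R D : Type*} [CommRing R] [Invertible (2 : R)]
    [AddCommGroup D] [Module R D] (A : Dialgebra D) (a b : D) :
    A.qj (A.qj b a) (A.qj a a) = A.qj (A.qj b (A.qj a a)) a :=
  quasiJordan_identity_general A a b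
end

section
/- In an associative dialgebra over a ring of characteristic not 2, the associator-derivation identity (b, a◁a, c) = 2·((b,a,c)◁a) holds for the product a◁b = a⊣b + b⊢a, where (x,y,z) = (x◁y)◁z − x◁(y◁z). -/
def Dialgebra.assoc {D : Type*} [AddCommGroup D] (A : Dialgebra D) (x y z : D) : D :=
  A.qj (A.qj x y) z - A.qj x (A.qj y z)

namespace Dialgebra

variable {D : Type*} [AddCommGroup D] (A : Dialgebra D)

theorem l_sub_left (x y z : D) : A.l (x - y) z = A.l x z - A.l y z :=
  (AddMonoidHom.mk' (A.l · z) (A.l_add_left · · z)).map_sub x y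

theorem r_sub_right (x y z : D) : A.r x (y - z) = A.r x y - A.r x z :=
  (AddMonoidHom.mk' (A.r x) (A.r_add_right x)).map_sub y z

theorem l_zsmul_right (n : ℤ) (x y : D) : A.l x (n • y) = n • A.l x y :=
  (AddMonoidHom.mk' (A.l x) (A.l_add_right x)).map_zsmul n y

theorem r_zsmul_right (n : ℤ) (x y : D) : A.r x (n • y) = n • A.r x y :=
  (AddMonoidHom.mk' (A.r x) (A.r_add_right x)).map_zsmul n y

theorem r_l_left (x y z : D) : A.r (A.l x y) z = A.r x (A.r y z) := by
  rw [← A.ax1, A.ax4]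

theorem r_qj_self_left (a x : D) : A.r (A.qj a a) x = (2 : ℤ) • A.r a (A.r a x) := by
  rw [qj, A.r_add_left, A.ax4, r_l_left, two_zsmul]

theorem l_qj_self_right (a x : D) : A.l x (A.qj a a) = (2 : ℤ) • A.l x (A.l a a) := by
  rw [qj, A.l_add_right, ← A.ax2, two_zsmul]

theorem assoc_eq_normalForm (x y z : D) :
    A.assoc x y z =
      A.r y (A.l x z) + A.r z (A.l x y) - A.l x (A.l z y) - A.r y (A.r z x) := by
  simp only [assoc, qj, A.l_add_left, A.l_add_right, A.r_add_left, A.r_add_right,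
    A.ax3, A.ax4, A.ax5, r_l_left, ← A.ax2]
  abel

end Dialgebra

theorem associatorDerivation_identity_general {D : Type*}
    [AddCommGroup D] (A : Dialgebra D) (a b c : D) :
    A.assoc b (A.qj a a) c = (2 : ℤ) • A.qj (A.assoc b a c) a := by
  calc A.assoc b (A.qj a a) c
      = (2 : ℤ) • (A.r a (A.r a (A.l b c)) + A.r c (A.l b (A.l a a))
          - A.l b (A.l c (A.l a a)) - A.r a (A.r a (A.r c b))) := by
        rw [A.assoc_eq_normalForm, A.r_qj_self_left, A.r_qj_self_left, A.l_qj_self_right,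
          A.l_qj_self_right, A.r_zsmul_right, A.l_zsmul_right]
        simp only [smul_add, smul_sub]
    _ = (2 : ℤ) • A.qj (A.assoc b a c) a := by
        simp only [A.assoc_eq_normalForm, Dialgebra.qj, A.l_add_left, A.l_sub_left,
          A.r_add_right, A.r_sub_right, A.ax3, A.ax5]
        congr 1
        abel

/-- The associator-derivation identity (b, a◁a, c) = 2·((b,a,c)◁a),
over a ring of characteristic ≠ 2. -/
theorem associatorDerivation_identity {R D : Type*} [CommRing R] [Invertible (2 : R)]
    [AddCommGroup D] [Module R D] (A : Dialgebra D) (a b c : D) :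
    A.assoc b (A.qj a a) c = (2 : ℤ) • A.qj (A.assoc b a c) a :=
  associatorDerivation_identity_general A a b c
end

section
/- Let J(a,b,c,d) and K(a,b,c,d) be the multilinear quasi-Jordan and associator-derivation polynomials in a right-commutative algebra, and define L(a,b,c,d) = ((ac)b)d + ((ad)b)c − (ab)(cd) − (ac)(bd) − (ad)(bc) + a((cd)b) and M(a,b,c,d) = (b(cd))a + (b(ac))d + (b(ad))c − (ba)(cd) − (bd)(ac) − (bc)(ad). Then in any right-commutative algebra: J(a,b,c,d) = M(b,a,d,c), K(a,b,c,d) = L(a,d,b,c) − M(b,a,c,d), L(a,b,c,d) = J(a,b,c,d) + K(a,c,d,b), and M(a,b,c,d) = J(b,a,c,d). -/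
/-!
Each relation compares signed sums of the same monomials; right commutativity is needed only to
bring at most two monomials of one side to the form in which they occur on the other.
-/

/-- The multilinear quasi-Jordan polynomial J. -/
def Jp {A : Type*} [NonUnitalNonAssocRing A] (a b c d : A) : A :=
  (a*(b*c))*d + (a*(b*d))*c + (a*(c*d))*b - (a*b)*(c*d) - (a*c)*(b*d) - (a*d)*(b*c)

/-- The multilinear associator-derivation polynomial K. -/
def Kp {A : Type*} [NonUnitalNonAssocRing A] (a b c d : A) : A :=
  ((a*b)*d)*c + ((a*c)*d)*b - (a*(b*c))*d - (a*(b*d))*c - (a*(c*d))*b + a*((b*c)*d)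

/-- Kolesnikov's polynomial L. -/
def Lp {A : Type*} [NonUnitalNonAssocRing A] (a b c d : A) : A :=
  ((a*c)*b)*d + ((a*d)*b)*c - (a*b)*(c*d) - (a*c)*(b*d) - (a*d)*(b*c) + a*((c*d)*b)

/-- Kolesnikov's polynomial M. -/
def Mp {A : Type*} [NonUnitalNonAssocRing A] (a b c d : A) : A :=
  (b*(c*d))*a + (b*(a*c))*d + (b*(a*d))*c - (b*a)*(c*d) - (b*d)*(a*c) - (b*c)*(a*d)

section Relations

variable {A : Type*} [NonUnitalNonAssocRing A]

theorem Mp_eq_Jp (a b c d : A) : Mp a b c d = Jp b a c d := by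
  simp only [Jp, Mp]
  abel

theorem Jp_eq_Mp (hrc : ∀ a b c : A, a * (b * c) = a * (c * b)) (a b c d : A) :
    Jp a b c d = Mp b a d c := by
  simp only [Jp, Mp, hrc a d c, hrc (a * b) d c]
  abel

theorem Kp_eq_Lp_sub_Mp (hrc : ∀ a b c : A, a * (b * c) = a * (c * b)) (a b c d : A) :
    Kp a b c d = Lp a d b c - Mp b a c d := by
  simp only [Kp, Lp, Mp, hrc (a * b) d c, hrc (a * c) d b]
  abel

theorem Lp_eq_Jp_add_Kp (hrc : ∀ a b c : A, a * (b * c) = a * (c * b)) (a b c d : A) :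
    Lp a b c d = Jp a b c d + Kp a c d b := by
  simp only [Jp, Kp, Lp, hrc a c b, hrc a d b]
  abel

end Relations

/-- Relations among J, K, L, M in any right-commutative algebra. -/
theorem JKLM_relations {A : Type*} [NonUnitalNonAssocRing A]
    (hrc : ∀ a b c : A, a*(b*c) = a*(c*b)) (a b c d : A) :
    Jp a b c d = Mp b a d c ∧
    Kp a b c d = Lp a d b c - Mp b a c d ∧
    Lp a b c d = Jp a b c d + Kp a c d b ∧
    Mp a b c d = Jp b a c d :=
  ⟨Jp_eq_Mp hrc a b c d, Kp_eq_Lp_sub_Mp hrc a b c d, Lp_eq_Jp_add_Kp hrc a b c d,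
    Mp_eq_Jp a b c d⟩
end

section
/- In a free right-commutative algebra, for any submonomial of the form x = yz within a monomial w, the factor z may be assumed commutative: any monomial obtained from w by applying commutativity within the right factor of any submonomial is equal to w modulo right-commutativity. -/
/-- Nonassociative monomials (binary trees with leaves labeled in X). -/
inductive Mag (X : Type*) where
  | leaf : X → Mag X
  | node : Mag X → Mag X → Mag X

/-- Equivalence of monomials modulo full commutativity: congruence closure of xy ~ yx. -/
inductive CEq {X : Type*} : Mag X → Mag X → Prop where
  | refl (t : Mag X) : CEq t t
  | symm {s t : Mag X} : CEq s t → CEq t s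
  | trans {s t u : Mag X} : CEq s t → CEq t u → CEq s u
  | congr {s s' t t' : Mag X} : CEq s s' → CEq t t' → CEq (.node s t) (.node s' t')
  | swap (s t : Mag X) : CEq (.node s t) (.node t s)

/-- Equivalence modulo right-commutativity: congruence closure of u(xy) ~ u(yx). -/
inductive RCEq {X : Type*} : Mag X → Mag X → Prop where
  | refl (t : Mag X) : RCEq t t
  | symm {s t : Mag X} : RCEq s t → RCEq t s
  | trans {s t u : Mag X} : RCEq s t → RCEq t u → RCEq s u
  | congr {s s' t t' : Mag X} : RCEq s s' → RCEq t t' → RCEq (.node s t) (.node s' t')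
  | swap (u x y : Mag X) : RCEq (.node u (.node x y)) (.node u (.node y x))

/-! Right-commutativity lets a right factor `st` be turned into `ts`, so either of its two
factors can be brought into a right-factor position, where the induction hypothesis on the
derivation of `z ~ z'` applies to it; swapping back finishes the congruence step. -/

namespace RCEq

variable {X : Type*}

theorem node_right {u t t' : Mag X} (h : RCEq t t') : RCEq (.node u t) (.node u t') :=
  .congr (.refl u) h

theorem node_node_left {u s s' t : Mag X} (h : RCEq (.node t s) (.node t s')) :
    RCEq (.node u (.node s t)) (.node u (.node s' t)) :=
  ((swap u s t).trans (node_right h)).trans (swap u t s')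

end RCEq

/-- In the free right-commutative algebra, the right factor of any submonomial may be
assumed commutative: if z ~ z' modulo full commutativity, then uz ~ uz' modulo
right-commutativity. -/
theorem right_factor_commutative {X : Type*} (u z z' : Mag X) (h : CEq z z') :
    RCEq (.node u z) (.node u z') := by
  induction h generalizing u with
  | refl _ => exact .refl _
  | symm _ ih => exact (ih u).symm
  | trans _ _ ih₁ ih₂ => exact (ih₁ u).trans (ih₂ u)
  | swap s t => exact .swap u s t
  | @congr s s' t t' _ _ ihs iht => exact (ihs t).node_node_left.trans (iht s').node_right
end

section
/- In an associative dialgebra, any product of elements a_1, …, a_n with center a_k (defined recursively by c(w) = w for generators, c(w1 ⊣ w2) = c(w1), c(w1 ⊢ w2) = c(w2)) equals the normal form (a_1 ⊢ ⋯ ⊢ a_{k−1}) ⊢ a_k ⊣ (a_{k+1} ⊣ ⋯ ⊣ a_n). In particular, for n = 3: any of the dialgebra products of a_1, a_2, a_3 with center a_2 equals a_1 ⊢ (a_2 ⊣ a_3). -/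
/-! Every monomial can be rebracketed step by step: `ax5` moves a `⊣` from outside a `⊢` to
inside it, `ax1` and `ax4` flatten everything left of the center into a `⊢`-chain, and `ax2` and
`ax3` flatten everything right of it into a `⊣`-chain. So the value of a monomial depends only on
the letters left of its center, the center, and the letters right of it. -/

namespace Dialgebra

inductive Monomial (α : Type*)
  | leaf : α → Monomial α
  | l : Monomial α → Monomial α → Monomial α
  | r : Monomial α → Monomial α → Monomial α

namespace Monomial

variable {α : Type*}

instance : Coe α (Monomial α) := ⟨leaf⟩

def leaves : Monomial α → List α
  | leaf x => [x]
  | l u v => u.leaves ++ v.leaves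
  | r u v => u.leaves ++ v.leaves

def center : Monomial α → α
  | leaf x => x
  | l u _ => u.center
  | r _ v => v.center

def leftOfCenter : Monomial α → List α
  | leaf _ => []
  | l u _ => u.leftOfCenter
  | r u v => u.leaves ++ v.leftOfCenter

def rightOfCenter : Monomial α → List α
  | leaf _ => []
  | l u v => u.rightOfCenter ++ v.leaves
  | r _ v => v.rightOfCenter

end Monomial

variable {D : Type*} [AddCommGroup D] (A : Dialgebra D)

def eval : Monomial D → D
  | .leaf x => x
  | .l u v => A.l (eval u) (eval v)
  | .r u v => A.r (eval u) (eval v)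

def lChain : D → List D → D
  | x, [] => x
  | x, y :: ys => A.l x (lChain y ys)

/-- `(a₁ ⊢ ⋯ ⊢ aₖ₋₁) ⊢ aₖ ⊣ (aₖ₊₁ ⊣ ⋯ ⊣ aₙ)`, with both chains bracketed to the right
(by `ax3` and `ax4` their bracketing is immaterial). -/
def normalForm (L : List D) (x : D) (R : List D) : D :=
  L.foldr A.r (A.lChain x R)

theorem r_eval_left (w : Monomial D) (z : D) : A.r (A.eval w) z = w.leaves.foldr A.r z := by
  induction w generalizing z with
  | leaf x => rfl
  | l u v ihu ihv => rw [eval, ← A.ax1, A.ax4, ihv, ihu, Monomial.leaves, List.foldr_append]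
  | r u v ihu ihv => rw [eval, A.ax4, ihv, ihu, Monomial.leaves, List.foldr_append]

theorem l_lChain_left (x z : D) (L M : List D) (hz : ∀ y, A.l y z = A.lChain y M) :
    A.l (A.lChain x L) z = A.lChain x (L ++ M) := by
  induction L generalizing x with
  | nil => exact hz x
  | cons y L ih => rw [lChain, A.ax3, ih]; rfl

theorem l_eval_right (x : D) (w : Monomial D) : A.l x (A.eval w) = A.lChain x w.leaves := by
  induction w generalizing x with
  | leaf y => rfl
  | l u v ihu ihv => rw [eval, ← A.ax3, ihu, Monomial.leaves, A.l_lChain_left _ _ _ _ ihv]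
  | r u v ihu ihv =>
    rw [eval, ← A.ax2, ← A.ax3, ihu, Monomial.leaves, A.l_lChain_left _ _ _ _ ihv]

theorem l_foldr_r (m z : D) (L : List D) : A.l (L.foldr A.r m) z = L.foldr A.r (A.l m z) := by
  induction L with
  | nil => rfl
  | cons y L ih => rw [List.foldr_cons, A.ax5, ih, List.foldr_cons]

theorem eval_eq_normalForm (w : Monomial D) :
    A.eval w = A.normalForm w.leftOfCenter w.center w.rightOfCenter := by
  induction w with
  | leaf x => rfl
  | l u v ihu _ =>
    rw [eval, ihu, normalForm, l_foldr_r, A.l_lChain_left _ _ _ _ (A.l_eval_right · v)]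
    rfl
  | r u v _ ihv =>
    rw [eval, ihv, r_eval_left, normalForm, ← List.foldr_append]
    rfl

end Dialgebra

/-- Normal form theorem in degrees 3 and 4: every dialgebra monomial with center
`a₂` (resp. `b` in degree 4) equals the Loday normal form
a₁ ⊢ (a₂ ⊣ a₃), resp. a ⊢ (b ⊣ (c ⊣ d)). -/
theorem dialgebra_normal_form_deg3_deg4 {D : Type*} [AddCommGroup D] (A : Dialgebra D)
    (a b c d : D) :
    -- degree 3, center the middle variable:
    (A.l (A.r a b) c = A.r a (A.l b c)) ∧
    -- degree 4, center the second variable: all seven monomials equal the normal form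
    (A.l (A.l (A.r a b) c) d = A.r a (A.l b (A.l c d))) ∧
    (A.l (A.r a (A.l b c)) d = A.r a (A.l b (A.l c d))) ∧
    (A.l (A.r a b) (A.l c d) = A.r a (A.l b (A.l c d))) ∧
    (A.l (A.r a b) (A.r c d) = A.r a (A.l b (A.l c d))) ∧
    (A.r a (A.l (A.l b c) d) = A.r a (A.l b (A.l c d))) ∧
    (A.r a (A.l b (A.r c d)) = A.r a (A.l b (A.l c d))) := by
  open Dialgebra.Monomial in
  exact ⟨A.eval_eq_normalForm (l (r a b) c),
    A.eval_eq_normalForm (l (l (r a b) c) d),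
    A.eval_eq_normalForm (l (r a (l b c)) d),
    A.eval_eq_normalForm (l (r a b) (l c d)),
    A.eval_eq_normalForm (l (r a b) (r c d)),
    A.eval_eq_normalForm (r a (l (l b c) d)),
    A.eval_eq_normalForm (r a (l b (r c d)))⟩
end

section
/- In an associative dialgebra, the expansion of the right-commutative monomial (ab)c under the quasi-Jordan product a◁b = a⊣b + b⊢a equals the sum of four dialgebra normal-form monomials: (a⊣b)⊣c + (b⊢a)⊣c + c⊢(a⊣b) + c⊢(b⊢a), and each of these equals a normal form with center a: â b c, c â b (appropriately ordered). In particular, the expansion of (ab)c and of a(cb) into the free associative dialgebra have exactly the claimed multisets of normal-form monomials, and E((ab)c + a(bc)) − E((ac)b + a(cb)) ≠ 0 in general while E(a(bc)) = E(a(cb)). -/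
/-! The expansion of `(ab)c` is bilinearity alone. For `a(bc)`, axiom `ax2` turns `a ⊣ (c ⊢ b)` into
`a ⊣ (c ⊣ b)` and axiom `ax1` turns `(c ⊢ b) ⊢ a` into `(c ⊣ b) ⊢ a`, after which the expansion is
visibly symmetric in `b` and `c`. An associative ring is a dialgebra with `⊣ = ⊢ = *`, where `◁` is the
anticommutator; for the matrix units `a = E₀₀, b = E₀₁, c = E₁₁` one gets `(a ◁ b) ◁ c = E₀₁` but
`(a ◁ c) ◁ b = 0`. -/

namespace Dialgebra

variable {D : Type*} [AddCommGroup D] (A : Dialgebra D)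

theorem qj_qj_left (a b c : D) :
    A.qj (A.qj a b) c = A.l (A.l a b) c + A.l (A.r b a) c + A.r c (A.l a b) + A.r c (A.r b a) := by
  simp only [qj, A.l_add_left, A.r_add_right]
  abel

theorem qj_qj_right (a b c : D) :
    A.qj a (A.qj b c) = A.l a (A.l b c) + A.l a (A.l c b) + A.r (A.l b c) a + A.r (A.l c b) a := by
  simp only [qj, A.l_add_right, A.r_add_left, ← A.ax2 a c b, A.ax1 c b a]
  abel

theorem qj_qj_right_comm (a b c : D) : A.qj a (A.qj b c) = A.qj a (A.qj c b) := by
  rw [qj_qj_right, qj_qj_right]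
  abel

def ofRing (R : Type*) [Ring R] : Dialgebra R where
  l := (· * ·)
  r := (· * ·)
  l_add_left := add_mul
  l_add_right := mul_add
  r_add_left := add_mul
  r_add_right := mul_add
  ax1 _ _ _ := rfl
  ax2 _ _ _ := rfl
  ax3 := mul_assoc
  ax4 := mul_assoc
  ax5 := mul_assoc

theorem ofRing_qj {R : Type*} [Ring R] (a b : R) : (ofRing R).qj a b = a * b + b * a :=
  rfl

theorem exists_qj_qj_add_ne :
    ∃ (D : Type) (_ : AddCommGroup D) (A : Dialgebra D) (a b c : D),
      A.qj (A.qj a b) c + A.qj a (A.qj b c) ≠ A.qj (A.qj a c) b + A.qj a (A.qj c b) := by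
  refine ⟨Matrix (Fin 2) (Fin 2) ℤ, inferInstance, ofRing _,
    Matrix.single 0 0 1, Matrix.single 0 1 1, Matrix.single 1 1 1, ?_⟩
  simp only [ofRing_qj]
  decide

end Dialgebra

/-- Expansion of (ab)c under the quasi-Jordan product is the sum of four dialgebra
monomials; the expansion map is well defined on right-commutative monomials
(E(a(bc)) = E(a(cb)) in every associative dialgebra); and in general
E((ab)c + a(bc)) − E((ac)b + a(cb)) ≠ 0. -/
theorem expansion_map_facts :
    (∀ (D : Type*) (_ : AddCommGroup D), ∀ (A : Dialgebra D) (a b c : D),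
      A.qj (A.qj a b) c =
        A.l (A.l a b) c + A.l (A.r b a) c + A.r c (A.l a b) + A.r c (A.r b a)) ∧
    (∀ (D : Type*) (_ : AddCommGroup D), ∀ (A : Dialgebra D) (a b c : D),
      A.qj a (A.qj b c) = A.qj a (A.qj c b)) ∧
    (∃ (D : Type) (_ : AddCommGroup D) (A : Dialgebra D) (a b c : D),
      A.qj (A.qj a b) c + A.qj a (A.qj b c) ≠ A.qj (A.qj a c) b + A.qj a (A.qj c b)) :=
  ⟨fun _ _ A => A.qj_qj_left, fun _ _ A => A.qj_qj_right_comm, Dialgebra.exists_qj_qj_add_ne⟩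
end
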